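/- arXiv:math/0405289 — 2 statements merged into one kernel-verified Lean document; each statement's English description precedes it below -/
import Mathlib

section
/- Let ξ be a finite atomless Borel measure on ℝ₊ with finite first moment, f_e a nonincreasing probability density on ℝ₊, G^x(y)=f_e(y)−f_e(x+y), H_ξ′(z)=ξ((z,∞)), and L_ξ^x(u) = G^x(u)H_ξ′(0) − ∫₀^u G^x(u−v) ξ(dv). Then for every x ≥ 0, ∫₀^∞ |L_ξ^x(u)| du ≤ 3 ξ(ℝ₊). -/
/-!
With `G y = f_e y - f_e (x + y) ≥ 0` and `c = ξ((0,∞))`, the triangle inequality gives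
`|L_ξ^x u| ≤ c G u + ∫_{[0,u]} G (u - v) ξ(dv)`, a sum of two nonnegative terms. Integrating
over `u ≥ 0`: `∫ G ≤ ∫ f_e = 1`, and by Fubini and translation invariance of Lebesgue
measure the convolution term integrates to `ξ([0,∞)) ∫ G`. Hence the integral is at most
`c + ξ([0,∞)) ≤ 2 ξ([0,∞))`.
-/

open MeasureTheory Set

theorem AntitoneOn.comp_max_right {α β : Type*} [LinearOrder α] [Preorder β] {f : α → β}
    {a : α} (hf : AntitoneOn f (Ici a)) : Antitone fun y => f (max y a) :=
  fun _ _ hyz => hf (le_max_right _ a) (le_max_right _ a) (max_le_max_right a hyz)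

theorem Antitone.integrableOn_Ici_comp_const_add {f : ℝ → ℝ} (hf : Antitone f)
    (hf0 : ∀ y, 0 ≤ f y) (hfi : IntegrableOn f (Ici 0)) {x : ℝ} (hx : 0 ≤ x) :
    IntegrableOn (fun y => f (x + y)) (Ici 0) :=
  hfi.mono' (hf.measurable.comp (measurable_const_add x)).aestronglyMeasurable <|
    ae_of_all _ fun y => by
      rw [Real.norm_of_nonneg (hf0 _)]
      exact hf (le_add_of_nonneg_left hx)

theorem Antitone.setIntegral_Ici_sub_comp_const_add_le {f : ℝ → ℝ} (hf : Antitone f)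
    (hf0 : ∀ y, 0 ≤ f y) (hfi : IntegrableOn f (Ici 0)) {x : ℝ} (hx : 0 ≤ x) :
    ∫ y in Ici 0, (f y - f (x + y)) ≤ ∫ y in Ici 0, f y := by
  rw [integral_sub hfi (hf.integrableOn_Ici_comp_const_add hf0 hfi hx)]
  exact sub_le_self _ (setIntegral_nonneg measurableSet_Ici fun _ _ => hf0 _)

section Convolution

variable (ξ : Measure ℝ) {g : ℝ → ℝ}

theorem setIntegral_Icc_sub_eq_setIntegral_Ici_indicator (u : ℝ) :
    ∫ v in Icc 0 u, g (u - v) ∂ξ = ∫ v in Ici 0, (Ici 0).indicator g (u - v) ∂ξ := by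
  have : (fun v => (Ici 0).indicator g (u - v)) = (Iic u).indicator fun v => g (u - v) := by
    ext v
    simp only [indicator, mem_Ici, mem_Iic, sub_nonneg]
  rw [this, integral_indicator measurableSet_Iic, Measure.restrict_restrict measurableSet_Iic,
    Iic_inter_Ici]

variable [IsFiniteMeasure ξ]

theorem integrable_indicator_Ici_sub_prod (hg : Measurable g) (hgi : IntegrableOn g (Ici 0)) :
    Integrable (fun p : ℝ × ℝ => (Ici 0).indicator g (p.1 - p.2))
      (volume.prod (ξ.restrict (Ici 0))) := by
  have hgi' : Integrable ((Ici 0).indicator g) := (integrable_indicator_iff measurableSet_Ici).2 hgi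
  refine (integrable_prod_iff' ?_).2 ⟨ae_of_all _ fun v => hgi'.comp_sub_right v, ?_⟩
  · exact ((hg.indicator measurableSet_Ici).comp
      (measurable_fst.sub measurable_snd)).aestronglyMeasurable
  · simp only [integral_sub_right_eq_self (‖(Ici 0).indicator g ·‖)]
    exact integrable_const _

theorem integrableOn_Ici_setIntegral_Icc_sub (hg : Measurable g) (hgi : IntegrableOn g (Ici 0)) :
    IntegrableOn (fun u => ∫ v in Icc 0 u, g (u - v) ∂ξ) (Ici 0) := by
  simp only [setIntegral_Icc_sub_eq_setIntegral_Ici_indicator]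
  exact (integrable_indicator_Ici_sub_prod ξ hg hgi).integral_prod_left.integrableOn

theorem integral_Ici_setIntegral_Icc_sub (hg : Measurable g) (hgi : IntegrableOn g (Ici 0)) :
    ∫ u in Ici 0, ∫ v in Icc 0 u, g (u - v) ∂ξ = ξ.real (Ici 0) * ∫ y in Ici 0, g y := by
  rw [setIntegral_eq_integral_of_forall_compl_eq_zero fun u hu => by
    rw [Icc_eq_empty (by simpa using hu), Measure.restrict_empty, integral_zero_measure]]
  simp only [setIntegral_Icc_sub_eq_setIntegral_Ici_indicator]
  rw [integral_integral_swap (integrable_indicator_Ici_sub_prod ξ hg hgi)]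
  simp only [integral_sub_right_eq_self ((Ici 0).indicator g), integral_indicator measurableSet_Ici,
    setIntegral_const, smul_eq_mul]

theorem integral_Ici_abs_mul_sub_setIntegral_Icc_sub_le (hg : Measurable g) (hg0 : ∀ y, 0 ≤ g y)
    (hgi : IntegrableOn g (Ici 0)) {c : ℝ} (hc : 0 ≤ c) :
    ∫ u in Ici 0, |g u * c - ∫ v in Icc 0 u, g (u - v) ∂ξ| ≤
      (c + ξ.real (Ici 0)) * ∫ y in Ici 0, g y := by
  have hKi := integrableOn_Ici_setIntegral_Icc_sub ξ hg hgi
  have hbound (u : ℝ) : |g u * c - ∫ v in Icc 0 u, g (u - v) ∂ξ| ≤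
      g u * c + ∫ v in Icc 0 u, g (u - v) ∂ξ := by
    have hK0 : 0 ≤ ∫ v in Icc 0 u, g (u - v) ∂ξ :=
      setIntegral_nonneg measurableSet_Icc fun _ _ => hg0 _
    simpa only [abs_of_nonneg hK0, abs_of_nonneg (mul_nonneg (hg0 u) hc)] using
      abs_sub (g u * c) (∫ v in Icc 0 u, g (u - v) ∂ξ)
  calc _ ≤ ∫ u in Ici 0, (g u * c + ∫ v in Icc 0 u, g (u - v) ∂ξ) :=
        integral_mono_of_nonneg (ae_of_all _ fun _ => abs_nonneg _) ((hgi.mul_const c).add hKi)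
          (ae_of_all _ hbound)
    _ = _ := by
      rw [integral_add (hgi.mul_const c) hKi, integral_mul_const,
        integral_Ici_setIntegral_Icc_sub ξ hg hgi]
      ring

end Convolution

theorem stmt9_general (ξ : Measure ℝ) [IsFiniteMeasure ξ]
    (fe : ℝ → ℝ) (hfe0 : ∀ x, 0 ≤ fe x) (hfem : AntitoneOn fe (Ici 0))
    (hfei : IntegrableOn fe (Ici 0)) (hfe1 : (∫ x in Ici (0:ℝ), fe x) = 1)
    (L : ℝ → ℝ → ℝ)
    (hL : ∀ x u, L x u = (fe u - fe (x + u)) * (ξ (Ioi (0:ℝ))).toReal -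
      ∫ v in Icc (0:ℝ) u, (fe (u - v) - fe (x + (u - v))) ∂ξ) :
    ∀ x ≥ (0:ℝ), (∫ u in Ici (0:ℝ), |L x u|) ≤ 3 * (ξ (Ici 0)).toReal := by
  intro x hx
  -- `fe` is only controlled on `[0, ∞)`; clamping makes it antitone, hence measurable, on `ℝ`.
  set F : ℝ → ℝ := fun y => fe (max y 0)
  have hF : Antitone F := hfem.comp_max_right
  have hFfe : EqOn F fe (Ici 0) := fun y hy => congrArg fe (max_eq_left hy)
  have hFi : IntegrableOn F (Ici 0) := hfei.congr_fun hFfe.symm measurableSet_Ici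
  have hFxi := hF.integrableOn_Ici_comp_const_add (fun _ => hfe0 _) hFi hx
  set G : ℝ → ℝ := fun y => F y - F (x + y)
  have hG0 (y : ℝ) : 0 ≤ G y := sub_nonneg.2 (hF (le_add_of_nonneg_left hx))
  have hG1 : ∫ y in Ici 0, G y ≤ 1 := by
    rw [← hfe1, ← setIntegral_congr_fun measurableSet_Ici hFfe]
    exact hF.setIntegral_Ici_sub_comp_const_add_le (fun _ => hfe0 _) hFi hx
  have hLG : EqOn (fun u => |L x u|)
      (fun u => |G u * (ξ (Ioi 0)).toReal - ∫ v in Icc 0 u, G (u - v) ∂ξ|) (Ici 0) := by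
    intro u hu
    have hG (y : ℝ) (hy : 0 ≤ y) : fe y - fe (x + y) = G y := by
      simp only [G, hFfe hy, hFfe (show 0 ≤ x + y by positivity)]
    simp only [hL, hG u hu,
      setIntegral_congr_fun measurableSet_Icc fun v hv => hG (u - v) (sub_nonneg.2 hv.2)]
  have hc : (ξ (Ioi 0)).toReal ≤ ξ.real (Ici 0) := measureReal_mono Ioi_subset_Ici_self
  calc ∫ u in Ici 0, |L x u|
      = ∫ u in Ici 0, |G u * (ξ (Ioi 0)).toReal - ∫ v in Icc 0 u, G (u - v) ∂ξ| :=
        setIntegral_congr_fun measurableSet_Ici hLG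
    _ ≤ ((ξ (Ioi 0)).toReal + ξ.real (Ici 0)) * ∫ y in Ici 0, G y :=
        integral_Ici_abs_mul_sub_setIntegral_Icc_sub_le ξ (hF.measurable.sub
          (hF.measurable.comp (measurable_const_add x))) hG0 (hFi.sub hFxi) ENNReal.toReal_nonneg
    _ ≤ ((ξ (Ioi 0)).toReal + ξ.real (Ici 0)) * 1 :=
        mul_le_mul_of_nonneg_left hG1 (by positivity)
    _ ≤ 3 * ξ.real (Ici 0) := by linarith [measureReal_nonneg (μ := ξ) (s := Ici 0)]

theorem stmt9 (ξ : Measure ℝ) [IsFiniteMeasure ξ] (hξ : ξ ≠ 0) (hsupp : ξ (Iio 0) = 0)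
    (hatom : ∀ x : ℝ, ξ {x} = 0) (hint : Integrable (fun y => y) ξ)
    (fe : ℝ → ℝ) (hfe0 : ∀ x, 0 ≤ fe x) (hfem : AntitoneOn fe (Ici 0))
    (hfei : IntegrableOn fe (Ici 0)) (hfe1 : (∫ x in Ici (0:ℝ), fe x) = 1)
    (L : ℝ → ℝ → ℝ)
    (hL : ∀ x u, L x u = (fe u - fe (x + u)) * (ξ (Ioi (0:ℝ))).toReal -
      ∫ v in Icc (0:ℝ) u, (fe (u - v) - fe (x + (u - v))) ∂ξ) :
    ∀ x ≥ (0:ℝ), (∫ u in Ici (0:ℝ), |L x u|) ≤ 3 * (ξ (Ici 0)).toReal :=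
  stmt9_general ξ fe hfe0 hfem hfei hfe1 L hL
end

section
/- Let ξ be a finite atomless Borel measure on ℝ₊ with finite first moment, ν_e a probability measure with nonincreasing density f_e on ℝ₊. Suppose for some ε > 0 that ⟨χ^{1+ε}, ν_e⟩ < ∞ and ⟨χ^{1+ε}, ξ⟩ < ∞. Then for each x ≥ 0 and all u > 0, (G^x * H_ξ)(u) ≤ K_ξ u^{−1−ε}, where K_ξ = (2^{1+ε}+1)(⟨χ^{1+ε},ν_e⟩⟨1,ξ⟩ + ⟨χ^{1+ε},ξ⟩), G^x(y)=f_e(y)−f_e(x+y), and (G^x*H_ξ)(u)=∫₀^u G^x(u−z)ξ((z,∞))dz. -/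
/-!
Dropping the nonnegative term `f_e(x + u - z)` leaves `∫₀^u f_e(u - z) H_ξ(z) dz`, which is split
at `u/2`. On `[0, u/2]` we use `H_ξ ≤ ξ(ℝ₊)` and the Markov bound for the `ν_e`-mass of
`[u/2, u]`; on `[u/2, u]` we use the Markov bound for `H_ξ(u/2)` and that the `ν_e`-mass of
`[0, u/2]` is at most 1. Both Markov bounds carry the factor `(u/2)^{-1-ε} = 2^{1+ε} u^{-1-ε}`.
-/

open MeasureTheory Set

theorem IntervalIntegrable.mul_antitone {g H : ℝ → ℝ} {a b : ℝ}
    (hg : IntervalIntegrable g volume a b) (hH : Antitone H) :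
    IntervalIntegrable (fun z => g z * H z) volume a b := by
  rw [intervalIntegrable_iff] at hg ⊢
  refine hg.mul_bdd (c := max |H (max a b)| |H (min a b)|) hH.measurable.aestronglyMeasurable
    (ae_restrict_of_forall_mem measurableSet_uIoc fun z hz => ?_)
  have hz' := uIoc_subset_uIcc hz
  exact abs_le_max_abs_abs (hH hz'.2) (hH hz'.1)

theorem MeasureTheory.IntegrableOn.intervalIntegrable_of_Ici {f : ℝ → ℝ} {c a b : ℝ}
    (hf : IntegrableOn f (Ici c)) (ha : c ≤ a) (hb : c ≤ b) :
    IntervalIntegrable f volume a b :=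
  (hf.mono_set fun _ hy => le_trans (le_min ha hb) hy.1).intervalIntegrable

theorem MeasureTheory.IntegrableOn.intervalIntegrable_comp_sub {f : ℝ → ℝ} {c u : ℝ}
    (hf : IntegrableOn f (Ici 0)) (hu : 0 ≤ u) (huc : u ≤ c) :
    IntervalIntegrable (fun z => f (c - z)) volume 0 u := by
  simpa using
    ((hf.intervalIntegrable_of_Ici (sub_nonneg.2 huc) (hu.trans huc)).comp_sub_left c).symm

theorem intervalIntegral_le_setIntegral_Ici {f : ℝ → ℝ} {a b : ℝ} (hab : a ≤ b)
    (hf0 : 0 ≤ f) (hf : IntegrableOn f (Ici a)) :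
    ∫ y in a..b, f y ≤ ∫ y in Ici a, f y := by
  rw [intervalIntegral.integral_of_le hab]
  exact setIntegral_mono_set hf (ae_of_all _ fun y => hf0 y)
    (Ioc_subset_Ioi_self.trans Ioi_subset_Ici_self).eventuallyLE

theorem setIntegral_Ici_le_rpow_neg_mul {μ : Measure ℝ} {g : ℝ → ℝ} {a p : ℝ}
    (ha : 0 < a) (hp : 0 ≤ p) (hg0 : 0 ≤ g) (hg : IntegrableOn g (Ici a) μ)
    (hmom : IntegrableOn (fun y => y ^ p * g y) (Ici 0) μ) :
    ∫ y in Ici a, g y ∂μ ≤ a ^ (-p) * ∫ y in Ici 0, y ^ p * g y ∂μ := by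
  have hsub : Ici a ⊆ Ici 0 := Ici_subset_Ici.mpr ha.le
  calc ∫ y in Ici a, g y ∂μ ≤ ∫ y in Ici a, a ^ (-p) * (y ^ p * g y) ∂μ := by
        refine setIntegral_mono_on hg ((hmom.mono_set hsub).const_mul _) measurableSet_Ici
          fun y hy => ?_
        have hay : 1 ≤ a ^ (-p) * y ^ p := by
          rw [Real.rpow_neg ha.le, inv_mul_eq_div,
            one_le_div₀ (Real.rpow_pos_of_pos ha p)]
          exact Real.rpow_le_rpow ha.le hy hp
        rw [← mul_assoc]
        exact le_mul_of_one_le_left (hg0 y) hay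
    _ = a ^ (-p) * ∫ y in Ici a, y ^ p * g y ∂μ := integral_const_mul _ _
    _ ≤ a ^ (-p) * ∫ y in Ici 0, y ^ p * g y ∂μ := by
        refine mul_le_mul_of_nonneg_left ?_ (Real.rpow_nonneg ha.le _)
        exact setIntegral_mono_set hmom (ae_restrict_of_forall_mem measurableSet_Ici fun y hy =>
          mul_nonneg (Real.rpow_nonneg hy p) (hg0 y)) hsub.eventuallyLE

theorem antitone_measureReal_Ioi (μ : Measure ℝ) [IsFiniteMeasure μ] :
    Antitone fun z => μ.real (Ioi z) := fun _ _ hab => measureReal_mono (Ioi_subset_Ioi hab)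

theorem ae_nonneg_of_measure_Iio_eq_zero {μ : Measure ℝ} (h : μ (Iio 0) = 0) :
    ∀ᵐ y ∂μ, 0 ≤ y := by
  simp only [ae_iff, not_le]
  exact h

theorem measureReal_Ioi_le_rpow_neg_mul_moment {ξ : Measure ℝ} [IsFiniteMeasure ξ]
    (hsupp : ξ (Iio 0) = 0) {a p : ℝ} (ha : 0 < a) (hp : 0 ≤ p)
    (hmom : Integrable (fun y => y ^ p) ξ) :
    ξ.real (Ioi a) ≤ a ^ (-p) * ∫ y, y ^ p ∂ξ := by
  have hξ : ξ.restrict (Ici 0) = ξ :=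
    Measure.restrict_eq_self_of_ae_mem (ae_nonneg_of_measure_Iio_eq_zero hsupp)
  have h := setIntegral_Ici_le_rpow_neg_mul (μ := ξ) (g := 1) ha hp zero_le_one
    (integrableOn_const (measure_ne_top _ _)) (by simpa using hmom.integrableOn)
  simp only [Pi.one_apply, mul_one, setIntegral_const, smul_eq_mul, hξ] at h
  exact (measureReal_mono Ioi_subset_Ici_self).trans h

theorem intervalIntegral_comp_sub_mul_antitone_le {f H : ℝ → ℝ} {u v : ℝ}
    (hv0 : 0 ≤ v) (hvu : v ≤ u) (hf0 : 0 ≤ f) (hf : IntervalIntegrable f volume 0 u)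
    (hH : Antitone H) :
    ∫ z in 0..u, f (u - z) * H z ≤
      H 0 * (∫ y in (u - v)..u, f y) + H v * ∫ y in 0..(u - v), f y := by
  have hfu : IntervalIntegrable (fun z => f (u - z)) volume 0 u := by
    simpa using (hf.comp_sub_left u).symm
  have hfuH := hfu.mul_antitone hH
  have hv : v ∈ uIcc 0 u := mem_uIcc.mpr (Or.inl ⟨hv0, hvu⟩)
  have hsub₁ : uIcc 0 v ⊆ uIcc 0 u := uIcc_subset_uIcc left_mem_uIcc hv
  have hsub₂ : uIcc v u ⊆ uIcc 0 u := uIcc_subset_uIcc hv right_mem_uIcc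
  rw [← intervalIntegral.integral_add_adjacent_intervals (hfuH.mono_set hsub₁)
    (hfuH.mono_set hsub₂)]
  refine add_le_add ?_ ?_
  · calc (∫ z in 0..v, f (u - z) * H z) ≤ ∫ z in 0..v, H 0 * f (u - z) := by
          refine intervalIntegral.integral_mono_on hv0 (hfuH.mono_set hsub₁)
            ((hfu.mono_set hsub₁).const_mul _) fun z hz => ?_
          rw [mul_comm]
          exact mul_le_mul_of_nonneg_right (hH hz.1) (hf0 _)
      _ = H 0 * ∫ y in (u - v)..u, f y := by
          rw [intervalIntegral.integral_const_mul, intervalIntegral.integral_comp_sub_left,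
            sub_zero]
  · calc (∫ z in v..u, f (u - z) * H z) ≤ ∫ z in v..u, H v * f (u - z) := by
          refine intervalIntegral.integral_mono_on hvu (hfuH.mono_set hsub₂)
            ((hfu.mono_set hsub₂).const_mul _) fun z hz => ?_
          rw [mul_comm]
          exact mul_le_mul_of_nonneg_right (hH hz.1) (hf0 _)
      _ = H v * ∫ y in 0..(u - v), f y := by
          rw [intervalIntegral.integral_const_mul, intervalIntegral.integral_comp_sub_left,
            sub_self]

theorem intervalIntegral_comp_sub_mul_measureReal_Ioi_le {ξ : Measure ℝ} [IsFiniteMeasure ξ]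
    (hsupp : ξ (Iio 0) = 0) {f : ℝ → ℝ} (hf0 : 0 ≤ f) (hf : IntegrableOn f (Ici 0))
    (hf1 : ∫ y in Ici 0, f y = 1) {p u : ℝ} (hp : 0 ≤ p) (hu : 0 < u)
    (hmom : IntegrableOn (fun y => y ^ p * f y) (Ici 0))
    (hmomξ : Integrable (fun y => y ^ p) ξ) :
    ∫ z in 0..u, f (u - z) * ξ.real (Ioi z) ≤
      2 ^ p * ((∫ y in Ici 0, y ^ p * f y) * ξ.real (Ici 0) + ∫ y, y ^ p ∂ξ) * u ^ (-p) := by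
  have hu2 : 0 < u / 2 := half_pos hu
  have hsplit := intervalIntegral_comp_sub_mul_antitone_le hu2.le (half_le_self hu.le) hf0
    (hf.intervalIntegrable_of_Ici le_rfl hu.le) (antitone_measureReal_Ioi ξ)
  rw [sub_half] at hsplit
  have hfar : ∫ y in (u / 2)..u, f y ≤ (u / 2) ^ (-p) * ∫ y in Ici 0, y ^ p * f y :=
    (intervalIntegral_le_setIntegral_Ici (half_le_self hu.le) hf0
      (hf.mono_set (Ici_subset_Ici.2 hu2.le))).trans
    (setIntegral_Ici_le_rpow_neg_mul hu2 hp hf0 (hf.mono_set (Ici_subset_Ici.2 hu2.le)) hmom)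
  have hnear : ∫ y in 0..(u / 2), f y ≤ 1 :=
    hf1 ▸ intervalIntegral_le_setIntegral_Ici hu2.le hf0 hf
  have hpow : (u / 2) ^ (-p) = 2 ^ p * u ^ (-p) := by
    rw [Real.div_rpow hu.le zero_le_two, Real.rpow_neg zero_le_two, div_inv_eq_mul, mul_comm]
  calc _ ≤ _ := hsplit
    _ ≤ ξ.real (Ici 0) * ((u / 2) ^ (-p) * ∫ y in Ici 0, y ^ p * f y) +
        (u / 2) ^ (-p) * ∫ y, y ^ p ∂ξ := by
      refine add_le_add (mul_le_mul (measureReal_mono Ioi_subset_Ici_self) hfar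
        (intervalIntegral.integral_nonneg (half_le_self hu.le) fun y _ => hf0 y)
        measureReal_nonneg) ?_
      exact (mul_le_of_le_one_right measureReal_nonneg hnear).trans
        (measureReal_Ioi_le_rpow_neg_mul_moment hsupp hu2 hp hmomξ)
    _ = _ := by rw [hpow]; ring

theorem stmt10_general (ξ : Measure ℝ) [IsFiniteMeasure ξ] (hsupp : ξ (Iio 0) = 0)
    (fe : ℝ → ℝ) (hfe0 : ∀ x, 0 ≤ fe x)
    (hfei : IntegrableOn fe (Ici 0)) (hfe1 : (∫ x in Ici (0:ℝ), fe x) = 1)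
    (ε : ℝ) (hε : 0 < ε)
    (hmom : IntegrableOn (fun y => y ^ (1 + ε) * fe y) (Ici 0))
    (hmomξ : Integrable (fun y => y ^ (1 + ε)) ξ) :
    ∀ x ≥ (0:ℝ), ∀ u > (0:ℝ),
      (∫ z in (0:ℝ)..u, (fe (u - z) - fe (x + (u - z))) * (ξ (Ioi z)).toReal) ≤
        ((2 : ℝ) ^ (1 + ε) + 1) *
          ((∫ y in Ici (0:ℝ), y ^ (1 + ε) * fe y) * (ξ (Ici 0)).toReal +
            ∫ y, y ^ (1 + ε) ∂ξ) * u ^ (-(1 + ε)) := by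
  intro x _ u hu
  simp only [← measureReal_def]
  have hH := antitone_measureReal_Ioi ξ
  have hfeu := (hfei.intervalIntegrable_comp_sub hu.le le_rfl).mul_antitone hH
  have hfexu :=
    (hfei.intervalIntegrable_comp_sub (c := x + u) hu.le (by linarith)).mul_antitone hH
  simp only [add_sub_assoc] at hfexu
  have hMξ : 0 ≤ ∫ y, y ^ (1 + ε) ∂ξ := integral_nonneg_of_ae <| by
    filter_upwards [ae_nonneg_of_measure_Iio_eq_zero hsupp] with y hy
    exact Real.rpow_nonneg hy _
  have hMe : 0 ≤ ∫ y in Ici 0, y ^ (1 + ε) * fe y := setIntegral_nonneg measurableSet_Ici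
    fun y hy => mul_nonneg (Real.rpow_nonneg hy _) (hfe0 y)
  calc _ ≤ ∫ z in 0..u, fe (u - z) * ξ.real (Ioi z) :=
        intervalIntegral.integral_mono_on hu.le (by simpa only [sub_mul] using hfeu.sub hfexu)
          hfeu fun z _ => mul_le_mul_of_nonneg_right (sub_le_self _ (hfe0 _)) measureReal_nonneg
    _ ≤ _ := intervalIntegral_comp_sub_mul_measureReal_Ioi_le hsupp hfe0 hfei hfe1 (by linarith)
        hu hmom hmomξ
    _ ≤ _ := by
      gcongr
      linarith

theorem stmt10 (ξ : Measure ℝ) [IsFiniteMeasure ξ] (hsupp : ξ (Iio 0) = 0)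
    (hatom : ∀ x : ℝ, ξ {x} = 0) (hint : Integrable (fun y => y) ξ)
    (fe : ℝ → ℝ) (hfe0 : ∀ x, 0 ≤ fe x) (hfem : AntitoneOn fe (Ici 0))
    (hfei : IntegrableOn fe (Ici 0)) (hfe1 : (∫ x in Ici (0:ℝ), fe x) = 1)
    (ε : ℝ) (hε : 0 < ε)
    (hmom : IntegrableOn (fun y => y ^ (1 + ε) * fe y) (Ici 0))
    (hmomξ : Integrable (fun y => y ^ (1 + ε)) ξ) :
    ∀ x ≥ (0:ℝ), ∀ u > (0:ℝ),
      (∫ z in (0:ℝ)..u, (fe (u - z) - fe (x + (u - z))) * (ξ (Ioi z)).toReal) ≤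
        ((2 : ℝ) ^ (1 + ε) + 1) *
          ((∫ y in Ici (0:ℝ), y ^ (1 + ε) * fe y) * (ξ (Ici 0)).toReal +
            ∫ y, y ^ (1 + ε) ∂ξ) * u ^ (-(1 + ε)) :=
  stmt10_general ξ hsupp fe hfe0 hfei hfe1 ε hε hmom hmomξ
end
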